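/- Let M be a proper geodesic metric space satisfying the CN inequality (i.e., a proper CAT(0) space), let γ be a geodesic ray in M, and let g : M → M be a surjective isometry such that g ∘ γ is asymptotic to γ. Set χ(g) := β_γ(g(γ(0))). Then g permutes the horoballs centered at the end of γ by the translation r ↦ r + χ(g): for every r ∈ ℝ, the image g(HB_r(γ)) equals HB_{r + χ(g)}(γ); equivalently, β_γ(g(p)) = β_γ(p) + χ(g) for all p ∈ M. -/
import Mathlib


open Metric Filter Set

/-- A geodesic ray in a metric space: an isometric embedding of `[0,∞)`,
modelled as a map `ℝ → M` that is isometric on nonnegative reals. -/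
def IsGeodesicRay {M : Type*} [MetricSpace M] (γ : ℝ → M) : Prop :=
  ∀ s t : ℝ, 0 ≤ s → 0 ≤ t → dist (γ s) (γ t) = |s - t|

/-- The Busemann function of a geodesic ray:
`β_γ(b) = sup_{t ≥ 0} (t − d(b, γ(t)))`. -/
noncomputable def busemann {M : Type*} [MetricSpace M] (γ : ℝ → M) (b : M) : ℝ :=
  sSup {x : ℝ | ∃ t : ℝ, 0 ≤ t ∧ x = t - dist b (γ t)}

/-- The (closed) horoball of `γ` at level `s`: `{p | β_γ(p) ≥ s}`. -/
def horoball {M : Type*} [MetricSpace M] (γ : ℝ → M) (s : ℝ) : Set M :=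
  {p : M | s ≤ busemann γ p}

/-- `M` is a geodesic metric space: any two points are joined by a geodesic segment. -/
def IsGeodesicSpace (M : Type*) [MetricSpace M] : Prop :=
  ∀ a b : M, ∃ σ : ℝ → M, σ 0 = a ∧ σ (dist a b) = b ∧
    ∀ s t : ℝ, s ∈ Set.Icc 0 (dist a b) → t ∈ Set.Icc 0 (dist a b) →
      dist (σ s) (σ t) = |s - t|

/-- The CN (Bruhat–Tits) inequality; a geodesic space satisfying it is CAT(0). -/
def CNInequality (M : Type*) [MetricSpace M] : Prop :=
  ∀ x y z m : M, dist y m = dist y z / 2 → dist m z = dist y z / 2 →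
    dist x m ^ 2 ≤ dist x y ^ 2 / 2 + dist x z ^ 2 / 2 - dist y z ^ 2 / 4

/-- Two geodesic rays are asymptotic if they stay at bounded distance. -/
def AsymptoticRays {M : Type*} [MetricSpace M] (γ γ' : ℝ → M) : Prop :=
  ∃ r : ℝ, ∀ t : ℝ, 0 ≤ t → dist (γ t) (γ' t) ≤ r

section Aux
variable {M : Type*} [MetricSpace M]

lemma busemann_bdd {γ : ℝ → M} (hγ : IsGeodesicRay γ) (b : M) :
    BddAbove {x : ℝ | ∃ t : ℝ, 0 ≤ t ∧ x = t - dist b (γ t)} := by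
  refine ⟨dist (γ 0) b, ?_⟩
  rintro x ⟨t, ht, rfl⟩
  have h := hγ 0 t le_rfl ht
  have h' : dist (γ 0) (γ t) = t := by rw [h, abs_of_nonpos (by linarith)]; ring
  have h2 := dist_triangle (γ 0) b (γ t)
  linarith

lemma busemann_le {γ : ℝ → M} {b : M} {B : ℝ}
    (h : ∀ t : ℝ, 0 ≤ t → t - dist b (γ t) ≤ B) : busemann γ b ≤ B := by
  have hne : Set.Nonempty {x : ℝ | ∃ t : ℝ, 0 ≤ t ∧ x = t - dist b (γ t)} :=
    ⟨0 - dist b (γ 0), 0, le_rfl, rfl⟩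
  refine csSup_le hne ?_
  rintro x ⟨t, ht, rfl⟩; exact h t ht

lemma le_busemann {γ : ℝ → M} (hγ : IsGeodesicRay γ) (b : M)
    {t : ℝ} (ht : 0 ≤ t) : t - dist b (γ t) ≤ busemann γ b :=
  le_csSup (busemann_bdd hγ b) ⟨t, ht, rfl⟩

lemma busemann_lip {γ : ℝ → M} (hγ : IsGeodesicRay γ) (x z : M) :
    busemann γ z ≤ busemann γ x + dist x z := by
  apply busemann_le
  intro t ht
  have h1 := le_busemann hγ x ht
  have h2 := dist_triangle x z (γ t)
  linarith

lemma busemann_self {γ : ℝ → M} (hγ : IsGeodesicRay γ) : busemann γ (γ 0) = 0 := by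
  apply le_antisymm
  · apply busemann_le
    intro t ht
    have h : dist (γ 0) (γ t) = t := by
      rw [hγ 0 t le_rfl ht, abs_of_nonpos (by linarith)]; ring
    linarith
  · have := le_busemann hγ (γ 0) (le_refl (0:ℝ))
    simpa using this

/-- Quadrilateral estimate: for a "strip" quadrilateral with short sides `≤ r`
and long sides `= 2S`, the sum of the diagonals squared is `≤ 16S² + 4r²`. -/
lemma quad_diag (hgeo : IsGeodesicSpace M) (hCN : CNInequality M)
    (p q P Q : M) (S r : ℝ)
    (hqp : dist q p ≤ r) (hPQ : dist P Q ≤ r)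
    (hpP : dist P p = 2 * S) (hqQ : dist q Q = 2 * S) :
    (dist q P + dist p Q) ^ 2 ≤ 16 * S ^ 2 + 4 * r ^ 2 := by
  have hr0 : 0 ≤ r := le_trans dist_nonneg hqp
  obtain ⟨σ, hσ0, hσd, hσ⟩ := hgeo p Q
  have hd0 : 0 ≤ dist p Q := dist_nonneg
  have h1 : dist p (σ (dist p Q / 2)) = dist p Q / 2 := by
    have h := hσ 0 (dist p Q / 2) ⟨le_rfl, hd0⟩ ⟨by linarith, by linarith⟩
    rw [hσ0] at h
    rw [h, abs_of_nonpos (by linarith)]; ring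
  have h2 : dist (σ (dist p Q / 2)) Q = dist p Q / 2 := by
    have h := hσ (dist p Q / 2) (dist p Q) ⟨by linarith, by linarith⟩ ⟨hd0, le_rfl⟩
    rw [hσd] at h
    rw [h, abs_of_nonpos (by linarith)]; ring
  have CN1 := hCN q p Q (σ (dist p Q / 2)) h1 h2
  have CN2 := hCN P p Q (σ (dist p Q / 2)) h1 h2
  have hqm : 0 ≤ dist q (σ (dist p Q / 2)) := dist_nonneg
  have hPm : 0 ≤ dist P (σ (dist p Q / 2)) := dist_nonneg
  have hqp2 : dist q p ^ 2 ≤ r ^ 2 := by nlinarith [dist_nonneg (x := q) (y := p)]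
  have hPQ2 : dist P Q ^ 2 ≤ r ^ 2 := by nlinarith [dist_nonneg (x := P) (y := Q)]
  have hPp2 : dist P p ^ 2 = 4 * S ^ 2 := by rw [hpP]; ring
  have hqQ2 : dist q Q ^ 2 = 4 * S ^ 2 := by rw [hqQ]; ring
  have htri : dist q P ≤ dist q (σ (dist p Q / 2)) + dist P (σ (dist p Q / 2)) := by
    have h := dist_triangle q (σ (dist p Q / 2)) P
    rw [dist_comm (σ (dist p Q / 2)) P] at h
    exact h
  nlinarith [sq_nonneg (dist q (σ (dist p Q / 2)) - dist P (σ (dist p Q / 2))),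
    sq_nonneg (dist q (σ (dist p Q / 2)) + dist P (σ (dist p Q / 2)) - dist p Q),
    sq_nonneg (dist q P + dist p Q), dist_nonneg (x := q) (y := P)]

lemma busemann_key (hgeo : IsGeodesicSpace M) (hCN : CNInequality M)
    (γ γ' : ℝ → M) (hγ : IsGeodesicRay γ) (hγ' : IsGeodesicRay γ')
    (r : ℝ) (hr : ∀ t : ℝ, 0 ≤ t → dist (γ t) (γ' t) ≤ r)
    (t : ℝ) (ht : 0 ≤ t) :
    2 * t ≤ busemann γ (γ' t) + busemann γ' (γ t) := by
  have hr0 : 0 ≤ r := le_trans dist_nonneg (hr 0 le_rfl)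
  refine le_of_forall_pos_le_add ?_
  intro ε hε
  obtain ⟨S, hS0, hSe⟩ : ∃ S : ℝ, 0 < S ∧ r ^ 2 ≤ 2 * ε * S := by
    refine ⟨max (r ^ 2 / (2 * ε)) 1, lt_of_lt_of_le one_pos (le_max_right _ _), ?_⟩
    have h := le_max_left (r ^ 2 / (2 * ε)) 1
    rw [div_le_iff₀ (by positivity)] at h
    linarith
  have htu : 0 ≤ t + 2 * S := by linarith
  have dpP : dist (γ (t + 2 * S)) (γ t) = 2 * S := by
    rw [hγ (t + 2 * S) t htu ht, abs_of_nonneg (by linarith)]; ring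
  have dqQ : dist (γ' t) (γ' (t + 2 * S)) = 2 * S := by
    rw [hγ' t (t + 2 * S) ht htu, abs_of_nonpos (by linarith)]; ring
  have dqp : dist (γ' t) (γ t) ≤ r := by rw [dist_comm]; exact hr t ht
  have dPQ : dist (γ (t + 2 * S)) (γ' (t + 2 * S)) ≤ r := hr _ htu
  have hsq := quad_diag hgeo hCN (γ t) (γ' t) (γ (t + 2 * S)) (γ' (t + 2 * S)) S r
    dqp dPQ dpP dqQ
  have hsum : dist (γ' t) (γ (t + 2 * S)) + dist (γ t) (γ' (t + 2 * S)) ≤ 4 * S + ε := by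
    by_contra hcon
    push_neg at hcon
    have hx0 : (0:ℝ) ≤ 4 * S + ε := by positivity
    have h2' : (4 * S + ε) ^ 2 < (dist (γ' t) (γ (t + 2 * S)) + dist (γ t) (γ' (t + 2 * S))) ^ 2 :=
      pow_lt_pow_left₀ hcon hx0 two_ne_zero
    nlinarith [sq_nonneg ε]
  have hb1 : (t + 2 * S) - dist (γ' t) (γ (t + 2 * S)) ≤ busemann γ (γ' t) :=
    le_busemann hγ (γ' t) htu
  have hb2 : (t + 2 * S) - dist (γ t) (γ' (t + 2 * S)) ≤ busemann γ' (γ t) :=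
    le_busemann hγ' (γ t) htu
  linarith

lemma busemann_cocycle (hgeo : IsGeodesicSpace M) (hCN : CNInequality M)
    (γ γ' : ℝ → M) (hγ : IsGeodesicRay γ) (hγ' : IsGeodesicRay γ')
    (r : ℝ) (hr : ∀ t : ℝ, 0 ≤ t → dist (γ t) (γ' t) ≤ r)
    (x y : M) :
    busemann γ y + busemann γ' x ≤ busemann γ x + busemann γ' y := by
  have core : ∀ u v : ℝ, 0 ≤ u → 0 ≤ v →
      (u - dist y (γ u)) + (v - dist x (γ' v)) ≤ busemann γ x + busemann γ' y := by
    intro u v hu hv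
    have htu : u ≤ max u v := le_max_left _ _
    have htv : v ≤ max u v := le_max_right _ _
    have ht : 0 ≤ max u v := le_trans hu htu
    have h1 : u - dist y (γ u) ≤ max u v - dist y (γ (max u v)) := by
      have htri := dist_triangle y (γ u) (γ (max u v))
      have h2 : dist (γ u) (γ (max u v)) = max u v - u := by
        rw [hγ u (max u v) hu ht, abs_of_nonpos (by linarith)]; ring
      linarith
    have h1' : v - dist x (γ' v) ≤ max u v - dist x (γ' (max u v)) := by
      have htri := dist_triangle x (γ' v) (γ' (max u v))
      have h2 : dist (γ' v) (γ' (max u v)) = max u v - v := by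
        rw [hγ' v (max u v) hv ht, abs_of_nonpos (by linarith)]; ring
      linarith
    have hk := busemann_key hgeo hCN γ γ' hγ hγ' r hr (max u v) ht
    have l1 : busemann γ (γ' (max u v)) ≤ busemann γ x + dist x (γ' (max u v)) :=
      busemann_lip hγ x (γ' (max u v))
    have l2 : busemann γ' (γ (max u v)) ≤ busemann γ' y + dist y (γ (max u v)) :=
      busemann_lip hγ' y (γ (max u v))
    linarith
  have h : busemann γ y ≤ (busemann γ x + busemann γ' y) - busemann γ' x := by
    apply busemann_le
    intro u hu
    have h2 : busemann γ' x ≤ (busemann γ x + busemann γ' y) - (u - dist y (γ u)) := by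
      apply busemann_le
      intro v hv
      linarith [core u v hu hv]
    linarith
  linarith

end Aux

/-- an isometry fixing the end of `γ` shifts the Busemann
function by `χ(g) = β_γ(g(γ(0)))` and translates the horoballs accordingly. -/
theorem isometry_translates_horoballs {M : Type*} [MetricSpace M] [ProperSpace M]
    (hgeo : IsGeodesicSpace M) (hCN : CNInequality M)
    (γ : ℝ → M) (hγ : IsGeodesicRay γ)
    (g : M → M) (hgs : Function.Surjective g) (hgi : Isometry g)
    (hasym : AsymptoticRays (g ∘ γ) γ) :
    (∀ p : M, busemann γ (g p) = busemann γ p + busemann γ (g (γ 0))) ∧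
    (∀ r : ℝ, g '' horoball γ r = horoball γ (r + busemann γ (g (γ 0)))) := by
  set γ' : ℝ → M := fun s => g (γ s) with hγ'def
  have hγ' : IsGeodesicRay γ' := by
    intro s t hs ht
    simp only [hγ'def, hgi.dist_eq]
    exact hγ s t hs ht
  obtain ⟨r, hrr⟩ := hasym
  have hr : ∀ t : ℝ, 0 ≤ t → dist (γ t) (γ' t) ≤ r := by
    intro t htt
    rw [dist_comm]
    exact hrr t htt
  have heq : ∀ p : M, busemann γ' (g p) = busemann γ p := by
    intro p
    have hd : ∀ t : ℝ, dist (g p) (γ' t) = dist p (γ t) := fun t => hgi.dist_eq p (γ t)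
    simp only [busemann, hd]
  have hz : busemann γ' (γ' 0) = 0 := busemann_self hγ'
  have const : ∀ x : M, busemann γ x = busemann γ' x + busemann γ (γ' 0) := by
    intro x
    have h1 := busemann_cocycle hgeo hCN γ γ' hγ hγ' r hr x (γ' 0)
    have h2 := busemann_cocycle hgeo hCN γ γ' hγ hγ' r hr (γ' 0) x
    linarith
  have part1 : ∀ p : M, busemann γ (g p) = busemann γ p + busemann γ (g (γ 0)) := by
    intro p
    have hc := const (g p)
    rw [heq p] at hc
    exact hc
  refine ⟨part1, ?_⟩
  intro r'
  ext q
  simp only [mem_image, horoball, mem_setOf_eq]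
  constructor
  · rintro ⟨p, hp, rfl⟩
    have := part1 p
    linarith
  · intro hq
    obtain ⟨p, rfl⟩ := hgs q
    exact ⟨p, by linarith [part1 p], rfl⟩
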